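/- Let G be a finite group and K ⊆ H normal subgroups of G with K ⊆ H. Then the transfer system generated by the single pair (K,H) equals {(M,M) : M ⊆ G} ∪ {(M ∩ K, M) : M ⊆ H}. -/

import Mathlib

open Pointwise

/-- Conjugate of a subgroup: `conjS g H = g H g⁻¹`. -/
def conjS {G : Type} [Group G] (g : G) (H : Subgroup G) : Subgroup G :=
  MulAut.conj g • H

/-- A `G`-transfer system: a partial order on the subgroups of `G` refining
inclusion, closed under conjugation and restriction. -/
structure TransferSystem (G : Type) [Group G] where
  rel : Subgroup G → Subgroup G → Prop
  le_of_rel : ∀ K H : Subgroup G, rel K H → K ≤ H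
  refl : ∀ H : Subgroup G, rel H H
  antisymm : ∀ K H : Subgroup G, rel K H → rel H K → K = H
  trans : ∀ J K H : Subgroup G, rel J K → rel K H → rel J H
  conj : ∀ (K H : Subgroup G) (g : G), rel K H → rel (conjS g K) (conjS g H)
  res : ∀ K H L : Subgroup G, rel K H → L ≤ H → rel (K ⊓ L) L

/-- The transfer system generated by a relation `R`, described as a relation:
`genRel R K H` holds iff every transfer system containing `R` relates `K` to
`H`; i.e. it is the smallest transfer system containing `R`. -/
def genRel {G : Type} [Group G] (R : Subgroup G → Subgroup G → Prop)
    (K H : Subgroup G) : Prop :=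
  ∀ T : TransferSystem G, (∀ A B, R A B → T.rel A B) → T.rel K H

lemma conjS_normal {G : Type} [Group G] (g : G) (N : Subgroup G) (hN : N.Normal) :
    conjS g N = N := by
  haveI := hN
  exact Subgroup.Normal.conj_smul_eq_self g N

lemma conjS_inf {G : Type} [Group G] (g : G) (A B : Subgroup G) :
    conjS g (A ⊓ B) = conjS g A ⊓ conjS g B :=
  Subgroup.smul_inf _ _ _

lemma conjS_mono {G : Type} [Group G] (g : G) {A B : Subgroup G} (h : A ≤ B) :
    conjS g A ≤ conjS g B := by
  unfold conjS
  exact Set.smul_set_mono h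

/-- Let `K ≤ H` be normal subgroups of a finite group `G`.
The transfer system generated by the single pair `(K, H)` is
`{(M, M) : M ⊆ G} ∪ {(M ⊓ K, M) : M ≤ H}`. -/
theorem stmt11 {G : Type} [Group G] [Finite G] (K H : Subgroup G)
    (hK : K.Normal) (hH : H.Normal) (hKH : K ≤ H) :
    ∀ A B : Subgroup G,
      genRel (fun A B => A = K ∧ B = H) A B ↔ (A = B ∨ (B ≤ H ∧ A = B ⊓ K)) := by
  intro A B
  constructor
  · intro hgen
    -- build the candidate transfer system
    refine hgen
      { rel := fun A B => A = B ∨ (B ≤ H ∧ A = B ⊓ K)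
        le_of_rel := ?_, refl := ?_, antisymm := ?_, trans := ?_, conj := ?_, res := ?_ }
      ?_
    · rintro X Y (rfl | ⟨hY, rfl⟩)
      · exact le_rfl
      · exact inf_le_left
    · intro X; exact Or.inl rfl
    · rintro X Y (rfl | ⟨hY, rfl⟩) h2
      · rfl
      · rcases h2 with h | ⟨_, h⟩
        · exact h.symm
        · rw [inf_assoc, inf_idem] at h
          exact h.symm
    · rintro X Y Z (rfl | ⟨hY, rfl⟩) h2
      · exact h2
      · rcases h2 with rfl | ⟨hZ, rfl⟩
        · exact Or.inr ⟨hY, rfl⟩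
        · refine Or.inr ⟨hZ, ?_⟩
          rw [inf_assoc, inf_idem]
    · rintro X Y g (rfl | ⟨hY, rfl⟩)
      · exact Or.inl rfl
      · refine Or.inr ⟨?_, ?_⟩
        · calc conjS g Y ≤ conjS g H := conjS_mono g hY
            _ = H := conjS_normal g H hH
        · rw [conjS_inf, conjS_normal g K hK]
    · rintro X Y L (rfl | ⟨hY, rfl⟩) hL
      · exact Or.inl (inf_eq_right.mpr hL)
      · refine Or.inr ⟨le_trans hL hY, ?_⟩
        rw [inf_comm Y K, inf_assoc, inf_eq_right.mpr hL, inf_comm]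
    · rintro X Y ⟨rfl, rfl⟩
      exact Or.inr ⟨le_rfl, (inf_eq_right.mpr hKH).symm⟩
  · rintro (rfl | ⟨hB, rfl⟩)
    · intro T _
      exact T.refl A
    · intro T hT
      have h1 : T.rel K H := hT K H ⟨rfl, rfl⟩
      have h2 := T.res K H B h1 hB
      rwa [inf_comm] at h2
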